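/- arXiv:2509.12911 — 3 statements merged into one kernel-verified Lean document; each statement's English description precedes it below -/
import Mathlib

section
/- Let H be a complex Hilbert space, M a von Neumann algebra on H, and Ψ, Φ ∈ H vectors such that ⟪Ψ, a Ψ⟫ = ⟪Φ, a Φ⟫ for all a ∈ M. Then there exists a partial isometry v in the commutant M.commutant (i.e. v * (adjoint v) * v = v) with v Ψ = Φ. (Uniqueness of the GNS representation: the intertwining unitary between the cyclic subspaces closure(M Ψ) and closure(M Φ) extends to a partial isometry commuting with M.) -/
/-!
If `⟪Ψ, a Ψ⟫ = ⟪Φ, a Φ⟫` on a star algebra `A` of operators, applying this to `a† a ∈ A` gives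
`‖a Φ‖ = ‖a Ψ‖`, so `a Ψ ↦ a Φ` is a well-defined isometry of the orbit `A Ψ` onto `A Φ`; it
extends to a unitary `U` between the cyclic subspaces `closure (A Ψ)` and `closure (A Φ)`.
Then `v = U ∘ P`, with `P` the orthogonal projection onto `closure (A Ψ)`, is a partial isometry
with `v Ψ = Φ`. It commutes with every `a ∈ A` on `A Ψ` by construction, and on `(A Ψ)ᗮ`, which
is `A`-invariant because `A` is star-closed, both `v a` and `a v` vanish.
-/

open scoped InnerProductSpace

open ContinuousLinearMap

namespace ContinuousLinearMap

variable {𝕜 E F : Type*} [RCLike 𝕜] [NormedAddCommGroup E] [InnerProductSpace 𝕜 E]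
  [CompleteSpace E]

def IsPartialIsometry [NormedAddCommGroup F] [InnerProductSpace 𝕜 F] [CompleteSpace F]
    (v : E →L[𝕜] F) : Prop :=
  v ∘L adjoint v ∘L v = v

theorem eq_of_eqOn_of_eqOn_orthogonal [NormedAddCommGroup F] [NormedSpace 𝕜 F] {f g : E →L[𝕜] F}
    (S : Submodule 𝕜 E) (hS : Set.EqOn f g S) (horth : Set.EqOn f g Sᗮ) : f = g := by
  have hclosure : S.topologicalClosure ≤ (f - g).ker :=
    S.topologicalClosure_minimal (fun x hx => sub_eq_zero.2 (hS hx)) (f - g).isClosed_ker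
  have hker : S.topologicalClosure ⊔ S.topologicalClosureᗮ ≤ (f - g).ker := by
    rw [Submodule.orthogonal_closure]
    exact sup_le hclosure fun x hx => sub_eq_zero.2 (horth hx)
  rw [Submodule.sup_orthogonal_of_hasOrthogonalProjection] at hker
  ext x
  exact sub_eq_zero.1 (hker Submodule.mem_top)

end ContinuousLinearMap

theorem LinearIsometry.isPartialIsometry_comp_orthogonalProjectionOnto {𝕜 E F : Type*} [RCLike 𝕜]
    [NormedAddCommGroup E] [InnerProductSpace 𝕜 E] [CompleteSpace E]
    [NormedAddCommGroup F] [InnerProductSpace 𝕜 F] [CompleteSpace F]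
    {K : Submodule 𝕜 E} [CompleteSpace K] (T : K →ₗᵢ[𝕜] F) :
    (T.toContinuousLinearMap ∘L K.orthogonalProjectionOnto).IsPartialIsometry := by
  set T' := T.toContinuousLinearMap
  set P := K.orthogonalProjectionOnto
  have hT : adjoint T' ∘L T' = 1 := (norm_map_iff_adjoint_comp_self _).1 T.norm_map
  have hP : P ∘L K.subtypeL = 1 := by ext x; simp [P]
  calc (T' ∘L P) ∘L adjoint (T' ∘L P) ∘L T' ∘L P
      = T' ∘L (P ∘L K.subtypeL) ∘L (adjoint T' ∘L T') ∘L P := by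
        simp only [adjoint_comp, P, Submodule.adjoint_orthogonalProjectionOnto]
        rfl
    _ = T' ∘L P := by rw [hP, hT]; rfl

namespace StarSubalgebra

variable {𝕜 E : Type*} [RCLike 𝕜] [NormedAddCommGroup E] [InnerProductSpace 𝕜 E]
  [CompleteSpace E] (A : StarSubalgebra 𝕜 (E →L[𝕜] E))

noncomputable def orbitMap (x : E) : A →ₗ[𝕜] E where
  toFun a := (a : E →L[𝕜] E) x
  map_add' _ _ := rfl
  map_smul' _ _ := rfl

noncomputable def cyclicSubspace (x : E) : Submodule 𝕜 E :=
  (LinearMap.range (A.orbitMap x)).topologicalClosure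

instance (x : E) : CompleteSpace (A.cyclicSubspace x) :=
  Submodule.topologicalClosure.completeSpace _

noncomputable def toCyclicSubspace (x : E) : A →ₗ[𝕜] A.cyclicSubspace x :=
  (A.orbitMap x).codRestrict _ fun a =>
    Submodule.le_topologicalClosure _ (LinearMap.mem_range_self _ a)

variable {A}

theorem norm_toCyclicSubspace (x : E) (a : A) :
    ‖A.toCyclicSubspace x a‖ = ‖(a : E →L[𝕜] E) x‖ :=
  rfl

theorem denseRange_toCyclicSubspace (x : E) : DenseRange (A.toCyclicSubspace x) := by
  rw [DenseRange, Subtype.dense_iff, ← Set.range_comp]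
  exact subset_rfl

theorem apply_mem_range_orbitMap {a : E →L[𝕜] E} (ha : a ∈ A) (x : E) {z : E}
    (hz : z ∈ LinearMap.range (A.orbitMap x)) : a z ∈ LinearMap.range (A.orbitMap x) := by
  obtain ⟨b, rfl⟩ := hz
  exact ⟨⟨a * b, mul_mem ha b.2⟩, rfl⟩

theorem apply_mem_orthogonal_range_orbitMap {a : E →L[𝕜] E} (ha : a ∈ A) (x : E) {w : E}
    (hw : w ∈ (LinearMap.range (A.orbitMap x))ᗮ) :
    a w ∈ (LinearMap.range (A.orbitMap x))ᗮ := by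
  have hinv : LinearMap.range (A.orbitMap x) ∈ Module.End.invtSubmodule (adjoint a).toLinearMap :=
    (Module.End.mem_invtSubmodule _).2 fun z hz => apply_mem_range_orbitMap (star_mem ha) x hz
  exact ContinuousLinearMap.orthogonal_mem_invtSubmodule hinv hw

theorem norm_apply_eq_of_inner_apply_eq {x y : E}
    (h : ∀ a ∈ A, ⟪x, a x⟫_𝕜 = ⟪y, a y⟫_𝕜) {a : E →L[𝕜] E} (ha : a ∈ A) : ‖a y‖ = ‖a x‖ := by
  have hmem : adjoint a ∘L a ∈ A := mul_mem (star_mem ha) ha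
  rw [← sq_eq_sq₀ (norm_nonneg _) (norm_nonneg _), apply_norm_sq_eq_inner_adjoint_right,
    apply_norm_sq_eq_inner_adjoint_right, h _ hmem]

theorem exists_linearIsometryEquiv_cyclicSubspace {x y : E} (h : ∀ a ∈ A, ‖a y‖ = ‖a x‖) :
    ∃ U : A.cyclicSubspace x ≃ₗᵢ[𝕜] A.cyclicSubspace y,
      ∀ a : A, U (A.toCyclicSubspace x a) = A.toCyclicSubspace y a :=
  ⟨(LinearEquiv.refl 𝕜 A).extendOfIsometry _ _ (denseRange_toCyclicSubspace x)
    (denseRange_toCyclicSubspace y) fun a => by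
      rw [LinearEquiv.refl_apply, norm_toCyclicSubspace, norm_toCyclicSubspace]
      exact h a a.2,
    fun a => by rw [LinearEquiv.extendOfIsometry_eq, LinearEquiv.refl_apply]⟩

theorem exists_isPartialIsometry_commute_apply_eq {x y : E} (h : ∀ a ∈ A, ‖a y‖ = ‖a x‖) :
    ∃ v : E →L[𝕜] E, v.IsPartialIsometry ∧ (∀ a ∈ A, Commute a v) ∧
      ∀ a ∈ A, v (a x) = a y := by
  obtain ⟨U, hU⟩ := exists_linearIsometryEquiv_cyclicSubspace h
  set T := (A.cyclicSubspace y).subtypeₗᵢ.comp U.toLinearIsometry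
  set P := (A.cyclicSubspace x).orthogonalProjectionOnto
  set v := T.toContinuousLinearMap ∘L P
  have hv_orbit : ∀ a ∈ A, v (a x) = a y := fun a ha => by
    have hP : P (a x) = A.toCyclicSubspace x ⟨a, ha⟩ :=
      Submodule.orthogonalProjectionOnto_mem_subspace_eq_self (A.toCyclicSubspace x ⟨a, ha⟩)
    show (U (P (a x)) : E) = a y
    rw [hP, hU]
    rfl
  have hv_orth : ∀ w ∈ (LinearMap.range (A.orbitMap x))ᗮ, v w = 0 := fun w hw => by
    have hP : P w = 0 := by
      rwa [Submodule.orthogonalProjectionOnto_eq_zero_iff, cyclicSubspace,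
        Submodule.orthogonal_closure]
    show (U (P w) : E) = 0
    rw [hP, map_zero]
    rfl
  refine ⟨v, T.isPartialIsometry_comp_orthogonalProjectionOnto, fun a ha => ?_, hv_orbit⟩
  refine eq_of_eqOn_of_eqOn_orthogonal (LinearMap.range (A.orbitMap x)) ?_ ?_
  · rintro _ ⟨b, rfl⟩
    show a (v (b.1 x)) = v (a (b.1 x))
    rw [hv_orbit _ b.2]
    exact (hv_orbit _ (mul_mem ha b.2)).symm
  · intro w hw
    show a (v w) = v (a w)
    rw [hv_orth w hw, hv_orth _ (apply_mem_orthogonal_range_orbitMap ha x hw), map_zero]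

end StarSubalgebra

/-- Uniqueness of the GNS representation: if two vectors induce the same state on a
von Neumann algebra `M`, they are related by a partial isometry in the commutant of `M`. -/
theorem exists_partialIsometry_commutant_of_same_state {H : Type*} [NormedAddCommGroup H]
    [InnerProductSpace ℂ H] [CompleteSpace H]
    (M : VonNeumannAlgebra H)
    (Ψ Φ : H) (hmarg : ∀ a ∈ M, ⟪Ψ, a Ψ⟫_ℂ = ⟪Φ, a Φ⟫_ℂ) :
    ∃ v ∈ M.commutant, v * (ContinuousLinearMap.adjoint v) * v = v ∧ v Ψ = Φ := by
  obtain ⟨v, hv, hcomm, hvΨ⟩ :=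
    StarSubalgebra.exists_isPartialIsometry_commute_apply_eq (A := M.toStarSubalgebra)
      fun a ha => StarSubalgebra.norm_apply_eq_of_inner_apply_eq hmarg ha
  refine ⟨v, VonNeumannAlgebra.mem_commutant_iff.2 fun a ha => hcomm a ha, hv, ?_⟩
  simpa using hvΨ 1 (one_mem _)
end

section
/- Let H be a complex Hilbert space and let M_A and M_B be von Neumann algebras on H that commute (a * b = b * a for all a ∈ M_A, b ∈ M_B) and have the Uhlmann property. Then for every vector Ψ ∈ H, the orthogonal projection (as an element of H →L[ℂ] H) onto the topological closure of the linear span of {b Ψ | b ∈ M_B} is an element of M_A. -/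
open scoped InnerProductSpace

/-- The pair `(M_A, M_B)` of von Neumann algebras has the *Uhlmann property* if any two
unit vectors inducing the same state on `M_A` can be mapped onto each other, up to
arbitrarily small error, by unitaries of `M_B`. -/
def UhlmannProperty {H : Type*} [NormedAddCommGroup H] [InnerProductSpace ℂ H]
    [CompleteSpace H] (M_A M_B : VonNeumannAlgebra H) : Prop :=
  ∀ Ψ Φ : H, ‖Ψ‖ = 1 → ‖Φ‖ = 1 →
    (∀ a ∈ M_A, ⟪Ψ, a Ψ⟫_ℂ = ⟪Φ, a Φ⟫_ℂ) →
    ∀ ε : ℝ, 0 < ε →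
      ∃ u ∈ M_B, star u * u = 1 ∧ u * star u = 1 ∧ ‖⟪Ψ, u Φ⟫_ℂ‖ ≥ 1 - ε

/-! A unitary `u` of the commutant `M_A'` does not change the state that `Ψ` induces on `M_A`,
so by the Uhlmann property `u Ψ` is approximated by the vectors `⟪v⋆ Ψ, u Ψ⟫ • v⋆ Ψ` with `v ∈ M_B`
unitary, and therefore lies in `K = closure (span (M_B Ψ))`. The commutant is a C⋆-algebra, hence
spanned by its unitaries, so `T Ψ ∈ K` for every `T ∈ M_A'`. As `M_B ⊆ M_A'`, this makes `K`
invariant under `M_A'`, and a projection with range invariant under `M_A'` lies in `M_A'' = M_A`. -/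

theorem norm_sub_inner_smul_sq {𝕜 E : Type*} [RCLike 𝕜] [NormedAddCommGroup E]
    [InnerProductSpace 𝕜 E] {w : E} (hw : ‖w‖ = 1) (x : E) :
    ‖x - ⟪w, x⟫_𝕜 • w‖ ^ 2 = ‖x‖ ^ 2 - ‖⟪w, x⟫_𝕜‖ ^ 2 := by
  rw [@norm_sub_sq 𝕜, inner_smul_right, ← inner_conj_symm, RCLike.conj_mul, norm_smul, hw]
  simp only [RCLike.norm_conj, ← RCLike.ofReal_pow, RCLike.ofReal_re]
  ring

namespace VonNeumannAlgebra

variable {H : Type*} [NormedAddCommGroup H] [InnerProductSpace ℂ H] [CompleteSpace H]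

theorem isClosed (S : VonNeumannAlgebra H) : IsClosed (S : Set (H →L[ℂ] H)) := by
  rw [← S.commutant_commutant, coe_commutant]
  exact Set.isClosed_centralizer _

theorem mem_span_unitary (S : VonNeumannAlgebra H) {x : H →L[ℂ] H} (hx : x ∈ S) :
    x ∈ Submodule.span ℂ ((S : Set (H →L[ℂ] H)) ∩ unitary (H →L[ℂ] H)) := by
  let A := S.toStarSubalgebra
  let _ : CStarAlgebra A := StarSubalgebra.cstarAlgebra A (h_closed := S.isClosed)
  obtain ⟨u, c, hxu, -⟩ := CStarAlgebra.exists_sum_four_unitary (⟨x, hx⟩ : A)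
  have hx' : x = ∑ i, c i • ((u i : A) : H →L[ℂ] H) := by simpa using congrArg A.subtype hxu
  rw [hx']
  refine Submodule.sum_mem _ fun i _ => Submodule.smul_mem _ _ (Submodule.subset_span ?_)
  exact ⟨(u i : A).2, Unitary.map_mem A.subtype (u i).2⟩

def cyclicSubspace (M : VonNeumannAlgebra H) (Ψ : H) : Submodule ℂ H :=
  (Submodule.span ℂ {x : H | ∃ b ∈ M, b Ψ = x}).topologicalClosure

theorem isClosed_cyclicSubspace (M : VonNeumannAlgebra H) (Ψ : H) :
    IsClosed (M.cyclicSubspace Ψ : Set H) :=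
  Submodule.isClosed_topologicalClosure _

instance (M : VonNeumannAlgebra H) (Ψ : H) : (M.cyclicSubspace Ψ).HasOrthogonalProjection :=
  have : CompleteSpace (M.cyclicSubspace Ψ) := (M.isClosed_cyclicSubspace Ψ).completeSpace_coe
  inferInstance

theorem apply_mem_cyclicSubspace {M : VonNeumannAlgebra H} {b : H →L[ℂ] H} (hb : b ∈ M)
    (Ψ : H) :
    b Ψ ∈ M.cyclicSubspace Ψ :=
  Submodule.le_topologicalClosure _ (Submodule.subset_span ⟨b, hb, rfl⟩)

theorem cyclicSubspace_smul_le {M : VonNeumannAlgebra H} (c : ℂ) (Ψ : H) :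
    M.cyclicSubspace (c • Ψ) ≤ M.cyclicSubspace Ψ := by
  refine Submodule.topologicalClosure_minimal _ ?_ (M.isClosed_cyclicSubspace Ψ)
  rw [Submodule.span_le]
  rintro _ ⟨b, hb, rfl⟩
  rw [map_smul]
  exact Submodule.smul_mem _ c (apply_mem_cyclicSubspace hb Ψ)

end VonNeumannAlgebra

open VonNeumannAlgebra

namespace UhlmannProperty

variable {H : Type*} [NormedAddCommGroup H] [InnerProductSpace ℂ H] [CompleteSpace H]
variable {M_A M_B : VonNeumannAlgebra H}

theorem mem_cyclicSubspace_of_norm_eq_one (huhlmann : UhlmannProperty M_A M_B) {Ψ Φ : H}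
    (hΨ : ‖Ψ‖ = 1) (hΦ : ‖Φ‖ = 1) (hstate : ∀ a ∈ M_A, ⟪Ψ, a Ψ⟫_ℂ = ⟪Φ, a Φ⟫_ℂ) :
    Φ ∈ M_B.cyclicSubspace Ψ := by
  rw [← SetLike.mem_coe, ← (M_B.isClosed_cyclicSubspace Ψ).closure_eq, Metric.mem_closure_iff]
  intro δ hδ
  obtain ⟨v, hvB, hvv, hvv', hvΦ⟩ := huhlmann Ψ Φ hΨ hΦ hstate (δ ^ 2 / 4) (by positivity)
  have hv : star v ∈ unitary (H →L[ℂ] H) := Unitary.star_mem (Unitary.mem_iff.mpr ⟨hvv, hvv'⟩)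
  have hw : ‖star v Ψ‖ = 1 := by rw [ContinuousLinearMap.norm_map_of_mem_unitary hv, hΨ]
  have ht : ⟪star v Ψ, Φ⟫_ℂ = ⟪Ψ, v Φ⟫_ℂ := by
    rw [ContinuousLinearMap.star_eq_adjoint, ContinuousLinearMap.adjoint_inner_left]
  have ht_le : ‖⟪Ψ, v Φ⟫_ℂ‖ ≤ 1 := by
    simpa [← ht, hw, hΦ] using norm_inner_le_norm (𝕜 := ℂ) (star v Ψ) Φ
  refine ⟨⟪star v Ψ, Φ⟫_ℂ • star v Ψ,
    Submodule.smul_mem _ _ (apply_mem_cyclicSubspace (star_mem hvB) Ψ), ?_⟩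
  rw [dist_eq_norm, ← sq_lt_sq₀ (norm_nonneg _) hδ.le, norm_sub_inner_smul_sq hw, hΦ, ht]
  -- `1 - t ^ 2 ≤ 2 (1 - t) ≤ δ ^ 2 / 2` for `t = ‖⟪Ψ, v Φ⟫‖ ≤ 1`
  nlinarith

theorem mem_cyclicSubspace (huhlmann : UhlmannProperty M_A M_B) {Ψ Φ : H}
    (hstate : ∀ a ∈ M_A, ⟪Ψ, a Ψ⟫_ℂ = ⟪Φ, a Φ⟫_ℂ) : Φ ∈ M_B.cyclicSubspace Ψ := by
  have hnorm : ‖Φ‖ = ‖Ψ‖ := by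
    have h := congrArg RCLike.re (hstate 1 (one_mem _))
    simp only [one_apply_eq_self, inner_self_eq_norm_sq] at h
    exact ((sq_eq_sq₀ (norm_nonneg _) (norm_nonneg _)).mp h).symm
  rcases eq_or_ne Ψ 0 with rfl | hΨ
  · rw [norm_eq_zero.mp (hnorm.trans norm_zero)]
    exact Submodule.zero_mem _
  set r : ℂ := (‖Ψ‖ : ℂ)
  have hr : r ≠ 0 := by simpa [r] using hΨ
  have hunit : ∀ x : H, ‖x‖ = ‖Ψ‖ → ‖r⁻¹ • x‖ = 1 := fun x hx => by
    rw [norm_smul, norm_inv, Complex.norm_real, norm_norm, hx,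
      inv_mul_cancel₀ (norm_ne_zero_iff.mpr hΨ)]
  have hΦ₀ : r⁻¹ • Φ ∈ M_B.cyclicSubspace (r⁻¹ • Ψ) :=
    huhlmann.mem_cyclicSubspace_of_norm_eq_one (hunit Ψ rfl) (hunit Φ hnorm) fun a ha => by
      simp only [map_smul, inner_smul_left, inner_smul_right, hstate a ha]
  simpa [smul_smul, hr] using Submodule.smul_mem _ r (cyclicSubspace_smul_le _ _ hΦ₀)

theorem unitary_apply_mem_cyclicSubspace (huhlmann : UhlmannProperty M_A M_B)
    {u : H →L[ℂ] H} (hu : u ∈ M_A.commutant) (hu' : u ∈ unitary (H →L[ℂ] H)) (Ψ : H) :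
    u Ψ ∈ M_B.cyclicSubspace Ψ :=
  huhlmann.mem_cyclicSubspace fun a ha => by
    rw [show a (u Ψ) = u (a Ψ) from congr($(mem_commutant_iff.mp hu a ha) Ψ),
      ContinuousLinearMap.inner_map_map_of_mem_unitary hu']

theorem apply_mem_cyclicSubspace_of_mem_commutant (huhlmann : UhlmannProperty M_A M_B)
    {T : H →L[ℂ] H} (hT : T ∈ M_A.commutant) (Ψ : H) : T Ψ ∈ M_B.cyclicSubspace Ψ := by
  suffices h : Submodule.span ℂ ((M_A.commutant : Set (H →L[ℂ] H)) ∩ unitary (H →L[ℂ] H)) ≤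
      (M_B.cyclicSubspace Ψ).comap (ContinuousLinearMap.apply ℂ H Ψ : (H →L[ℂ] H) →ₗ[ℂ] H) from
    h (M_A.commutant.mem_span_unitary hT)
  rw [Submodule.span_le]
  exact fun u hu => huhlmann.unitary_apply_mem_cyclicSubspace hu.1 hu.2 Ψ

theorem cyclicSubspace_mem_invtSubmodule (huhlmann : UhlmannProperty M_A M_B)
    (hBA : M_B ≤ M_A.commutant) {T : H →L[ℂ] H} (hT : T ∈ M_A.commutant) (Ψ : H) :
    M_B.cyclicSubspace Ψ ∈ Module.End.invtSubmodule (T : H →ₗ[ℂ] H) := by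
  rw [Module.End.mem_invtSubmodule]
  refine Submodule.topologicalClosure_minimal _ ?_
    ((M_B.isClosed_cyclicSubspace Ψ).preimage T.continuous)
  rw [Submodule.span_le]
  rintro _ ⟨b, hb, rfl⟩
  exact huhlmann.apply_mem_cyclicSubspace_of_mem_commutant (mul_mem hT (hBA hb)) Ψ

end UhlmannProperty

/-- Under the Uhlmann property, the orthogonal projection onto the cyclic subspace
`closure (span {b Ψ | b ∈ M_B})` belongs to `M_A`, for every vector `Ψ`. -/
theorem cyclic_projection_mem_of_uhlmann {H : Type*} [NormedAddCommGroup H]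
    [InnerProductSpace ℂ H] [CompleteSpace H]
    (M_A M_B : VonNeumannAlgebra H)
    (hcomm : ∀ a ∈ M_A, ∀ b ∈ M_B, a * b = b * a)
    (huhlmann : UhlmannProperty M_A M_B) :
    ∀ Ψ : H,
      ((Submodule.span ℂ {x : H | ∃ b ∈ M_B, b Ψ = x}).topologicalClosure).subtypeL.comp
        (Submodule.orthogonalProjectionOnto
          (Submodule.span ℂ {x : H | ∃ b ∈ M_B, b Ψ = x}).topologicalClosure) ∈ M_A := by
  intro Ψ
  have hBA : M_B ≤ M_A.commutant := fun b hb => mem_commutant_iff.mpr fun a ha => hcomm a ha b hb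
  change (M_B.cyclicSubspace Ψ).starProjection ∈ M_A
  rw [IsStarProjection.mem_iff isStarProjection_starProjection, Submodule.range_starProjection]
  exact fun T hT => huhlmann.cyclicSubspace_mem_invtSubmodule hBA hT Ψ
end

section
/- Let H be a complex Hilbert space and let M_A and M_B be von Neumann algebras on H that commute (a * b = b * a for all a ∈ M_A, b ∈ M_B) and have the Uhlmann property. If Ψ, Φ ∈ H satisfy ⟪Ψ, a Ψ⟫ = ⟪Φ, a Φ⟫ for all a ∈ M_A, then there exists a partial isometry v ∈ M_B (i.e. v * (adjoint v) * v = v) with v Ψ = Φ. -/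
/-!
Conjugating by a unitary of `M_B` does not change the state a vector induces on the commutant
`M_B'`, and vector states depend continuously on the vector, up to a phase. Hence the Uhlmann
property forces `Ψ` and `Φ` to induce the same state on `M_B'`. Then `c Ψ ↦ c Φ` (`c ∈ M_B'`) is
a well-defined isometry; extended to the closure of `M_B' Ψ` and by zero on its orthogonal
complement, it is a partial isometry commuting with `M_B'`, so it lies in `M_B'' = M_B`.
-/

open scoped InnerProductSpace

open ContinuousLinearMap

open Filter Topology in
theorem nonpos_of_forall_le_mul_sqrt {d K : ℝ} (h : ∀ ε > 0, d ≤ K * √ε) : d ≤ 0 := by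
  have hlim : Tendsto (fun ε => K * √ε) (𝓝[>] 0) (𝓝 0) := by
    simpa using ((continuous_const.mul Real.continuous_sqrt).tendsto 0).mono_left
      nhdsWithin_le_nhds (f := fun ε => K * √ε)
  exact ge_of_tendsto hlim (eventually_nhdsWithin_of_forall h)

section VectorState

variable {𝕜 E : Type*} [RCLike 𝕜] [NormedAddCommGroup E] [InnerProductSpace 𝕜 E]

theorem norm_inner_map_self_sub_inner_map_self_le (c : E →L[𝕜] E) (x y : E) :
    ‖⟪y, c y⟫_𝕜 - ⟪x, c x⟫_𝕜‖ ≤ ‖c‖ * (‖x‖ + ‖y‖) * ‖y - x‖ := by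
  have hsplit : ⟪y, c y⟫_𝕜 - ⟪x, c x⟫_𝕜 = ⟪y - x, c y⟫_𝕜 + ⟪x, c (y - x)⟫_𝕜 := by
    rw [inner_sub_left, map_sub, inner_sub_right]; ring
  calc ‖⟪y, c y⟫_𝕜 - ⟪x, c x⟫_𝕜‖
      ≤ ‖y - x‖ * ‖c y‖ + ‖x‖ * ‖c (y - x)‖ := by
        rw [hsplit]
        exact (norm_add_le _ _).trans (add_le_add (norm_inner_le_norm _ _) (norm_inner_le_norm _ _))
    _ ≤ ‖y - x‖ * (‖c‖ * ‖y‖) + ‖x‖ * (‖c‖ * ‖y - x‖) := by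
        gcongr <;> exact c.le_opNorm _
    _ = ‖c‖ * (‖x‖ + ‖y‖) * ‖y - x‖ := by ring

theorem inner_smul_map_smul_self (c : E →L[𝕜] E) (a : 𝕜) (x : E) :
    ⟪a • x, c (a • x)⟫_𝕜 = (‖a‖ ^ 2 : 𝕜) * ⟪x, c x⟫_𝕜 := by
  rw [map_smul, inner_smul_left, inner_smul_right, ← mul_assoc, RCLike.conj_mul]

theorem inner_map_map_self_of_commute [CompleteSpace E] {c u : E →L[𝕜] E}
    (hu : star u * u = 1) (hcu : Commute c u) (x : E) :
    ⟪u x, c (u x)⟫_𝕜 = ⟪x, c x⟫_𝕜 := by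
  rw [← mul_apply_eq_comp, hcu.eq, mul_apply_eq_comp, ← adjoint_inner_right, ← star_eq_adjoint,
    ← mul_apply_eq_comp, hu, one_apply_eq_self]

end VectorState

section Phase

variable {H : Type*} [NormedAddCommGroup H] [InnerProductSpace ℂ H]

theorem exists_norm_eq_one_norm_sub_smul_sq (x y : H) :
    ∃ z : ℂ, ‖z‖ = 1 ∧ ‖y - z • x‖ ^ 2 = ‖x‖ ^ 2 + ‖y‖ ^ 2 - 2 * ‖⟪x, y⟫_ℂ‖ := by
  set z := Complex.exp (Complex.arg ⟪x, y⟫_ℂ * Complex.I)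
  have hz : ‖z‖ = 1 := Complex.norm_exp_ofReal_mul_I _
  refine ⟨z, hz, ?_⟩
  have hre : ⟪y, z • x⟫_ℂ = ‖⟪x, y⟫_ℂ‖ := by
    conv_lhs => rw [inner_smul_right, ← inner_conj_symm, ← Complex.norm_mul_exp_arg_mul_I ⟪x, y⟫_ℂ]
    rw [map_mul, Complex.conj_ofReal, mul_left_comm, RCLike.mul_conj, hz]
    simp
  rw [norm_sub_sq (𝕜 := ℂ), hre, RCLike.re_to_complex, Complex.ofReal_re, norm_smul, hz, one_mul]
  ring

end Phase

section Uhlmann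

variable {H : Type*} [NormedAddCommGroup H] [InnerProductSpace ℂ H] [CompleteSpace H]

theorem norm_inner_map_self_sub_le_of_commute {c u : H →L[ℂ] H} (hu : star u * u = 1)
    (hcu : Commute c u) {x y : H} (hx : ‖x‖ = 1) (hy : ‖y‖ = 1) :
    ‖⟪y, c y⟫_ℂ - ⟪x, c x⟫_ℂ‖ ≤ 2 * ‖c‖ * √(2 - 2 * ‖⟪x, u y⟫_ℂ‖) := by
  have huy : ‖u y‖ = 1 := by
    rw [(norm_map_iff_adjoint_comp_self u).2 (by rwa [← star_eq_adjoint]), hy]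
  obtain ⟨z, hz, hdist⟩ := exists_norm_eq_one_norm_sub_smul_sq x (u y)
  have hdist' : ‖u y - z • x‖ = √(2 - 2 * ‖⟪x, u y⟫_ℂ‖) := by
    rw [← Real.sqrt_sq (norm_nonneg (u y - z • x)), hdist, hx, huy]; norm_num
  calc ‖⟪y, c y⟫_ℂ - ⟪x, c x⟫_ℂ‖ = ‖⟪u y, c (u y)⟫_ℂ - ⟪z • x, c (z • x)⟫_ℂ‖ := by
        rw [inner_map_map_self_of_commute hu hcu, inner_smul_map_smul_self, hz]; simp
    _ ≤ ‖c‖ * (‖z • x‖ + ‖u y‖) * ‖u y - z • x‖ :=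
        norm_inner_map_self_sub_inner_map_self_le c _ _
    _ = 2 * ‖c‖ * √(2 - 2 * ‖⟪x, u y⟫_ℂ‖) := by
        rw [norm_smul, hz, hx, huy, hdist']; ring

theorem UhlmannProperty.inner_map_self_eq_of_norm_eq_one {M_A M_B : VonNeumannAlgebra H}
    (hU : UhlmannProperty M_A M_B) {Ψ Φ : H} (hΨ : ‖Ψ‖ = 1) (hΦ : ‖Φ‖ = 1)
    (hmarg : ∀ a ∈ M_A, ⟪Ψ, a Ψ⟫_ℂ = ⟪Φ, a Φ⟫_ℂ) {c : H →L[ℂ] H} (hc : c ∈ M_B.commutant) :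
    ⟪Ψ, c Ψ⟫_ℂ = ⟪Φ, c Φ⟫_ℂ := by
  refine (sub_eq_zero.1 <| norm_le_zero_iff.1 <|
    nonpos_of_forall_le_mul_sqrt (K := 2 * ‖c‖) fun ε hε => ?_).symm
  obtain ⟨u, hu, hu1, -, hfid⟩ := hU Ψ Φ hΨ hΦ hmarg (ε / 2) (by positivity)
  calc _ ≤ 2 * ‖c‖ * √(2 - 2 * ‖⟪Ψ, u Φ⟫_ℂ‖) :=
        norm_inner_map_self_sub_le_of_commute hu1
          (VonNeumannAlgebra.mem_commutant_iff.1 hc u hu).symm hΨ hΦ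
    _ ≤ 2 * ‖c‖ * √ε := by gcongr; linarith

theorem UhlmannProperty.inner_map_self_eq {M_A M_B : VonNeumannAlgebra H}
    (hU : UhlmannProperty M_A M_B) {Ψ Φ : H} (hmarg : ∀ a ∈ M_A, ⟪Ψ, a Ψ⟫_ℂ = ⟪Φ, a Φ⟫_ℂ)
    {c : H →L[ℂ] H} (hc : c ∈ M_B.commutant) :
    ⟪Ψ, c Ψ⟫_ℂ = ⟪Φ, c Φ⟫_ℂ := by
  have hnorm : ‖Ψ‖ = ‖Φ‖ := by
    have h := hmarg 1 (one_mem M_A)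
    simp only [one_apply_eq_self, inner_self_eq_norm_sq_to_K] at h
    exact (sq_eq_sq₀ (norm_nonneg _) (norm_nonneg _)).1 (by exact_mod_cast h)
  rcases eq_or_ne Ψ 0 with rfl | hΨ
  · obtain rfl : Φ = 0 := norm_eq_zero.1 (by rw [← hnorm, norm_zero])
    rfl
  have hΦ : Φ ≠ 0 := norm_ne_zero_iff.1 (hnorm ▸ norm_ne_zero_iff.2 hΨ)
  have hscaled := hU.inner_map_self_eq_of_norm_eq_one
    (Ψ := (‖Ψ‖ : ℂ)⁻¹ • Ψ) (Φ := (‖Ψ‖ : ℂ)⁻¹ • Φ)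
    (norm_smul_inv_norm hΨ) (by rw [hnorm]; exact norm_smul_inv_norm hΦ)
    (fun a ha => by rw [inner_smul_map_smul_self, inner_smul_map_smul_self, hmarg a ha]) hc
  rw [inner_smul_map_smul_self, inner_smul_map_smul_self] at hscaled
  exact mul_left_cancel₀ (by simpa using hΨ) hscaled

end Uhlmann

section IsometryOfNormEq

variable {𝕜 M E F : Type*} [RCLike 𝕜] [AddCommGroup M] [Module 𝕜 M]
  [NormedAddCommGroup E] [NormedSpace 𝕜 E] [NormedAddCommGroup F] [NormedSpace 𝕜 F]
  [CompleteSpace F]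

namespace LinearMap

variable (e : M →ₗ[𝕜] E) (f : M →ₗ[𝕜] F)

theorem mem_topologicalClosure_range (x : M) : e x ∈ (range e).topologicalClosure :=
  Submodule.le_topologicalClosure _ (mem_range_self e x)

theorem denseRange_codRestrict_topologicalClosure :
    DenseRange (e.codRestrict _ e.mem_topologicalClosure_range) := by
  refine Subtype.dense_iff.2 fun y hy => ?_
  rwa [← Set.range_comp]

theorem extendOfNorm_codRestrict_apply (h : ∀ x, ‖f x‖ = ‖e x‖) (x : M) :
    f.extendOfNorm (e.codRestrict _ e.mem_topologicalClosure_range)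
      ⟨e x, e.mem_topologicalClosure_range x⟩ = f x :=
  extendOfNorm_eq e.denseRange_codRestrict_topologicalClosure ⟨1, fun x => by simp [h x]⟩ x

noncomputable def isometryOfNormEq (h : ∀ x, ‖f x‖ = ‖e x‖) :
    (range e).topologicalClosure →ₗᵢ[𝕜] F where
  toLinearMap := f.extendOfNorm (e.codRestrict _ e.mem_topologicalClosure_range)
  norm_map' y := e.denseRange_codRestrict_topologicalClosure.induction_on y
    (isClosed_eq (by fun_prop) continuous_norm) fun x =>
      (congrArg norm (extendOfNorm_codRestrict_apply e f h x)).trans (h x)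

theorem isometryOfNormEq_apply (h : ∀ x, ‖f x‖ = ‖e x‖) (x : M) :
    isometryOfNormEq e f h ⟨e x, e.mem_topologicalClosure_range x⟩ = f x :=
  extendOfNorm_codRestrict_apply e f h x

end LinearMap

end IsometryOfNormEq

section ExtendByZero

variable {𝕜 E F : Type*} [RCLike 𝕜] [NormedAddCommGroup E] [InnerProductSpace 𝕜 E]
  [NormedAddCommGroup F] [InnerProductSpace 𝕜 F]

theorem ContinuousLinearMap.ext_on_orthogonal [CompleteSpace E] (W : Submodule 𝕜 E)
    {f g : E →L[𝕜] F} (h : ∀ x ∈ W, f x = g x) (h' : ∀ x ∈ Wᗮ, f x = g x) : f = g := by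
  refine ext_on (s := W ∪ Wᗮ) ?_ fun x hx => hx.elim (h x) (h' x)
  rw [Submodule.span_union, Submodule.span_eq, Submodule.span_eq,
    Submodule.dense_iff_topologicalClosure_eq_top, Submodule.topologicalClosure_eq_top_iff,
    ← Submodule.inf_orthogonal, Submodule.inf_orthogonal_eq_bot]

namespace LinearIsometry

variable {K : Submodule 𝕜 E} [K.HasOrthogonalProjection] (T : K →ₗᵢ[𝕜] F)

noncomputable def extendByZero : E →L[𝕜] F :=
  T.toContinuousLinearMap ∘L K.orthogonalProjectionOnto

theorem extendByZero_apply_coe (x : K) : T.extendByZero x = T x := by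
  simp [extendByZero]

theorem extendByZero_apply_of_mem_orthogonal {x : E} (hx : x ∈ Kᗮ) : T.extendByZero x = 0 := by
  simp [extendByZero, Submodule.orthogonalProjectionOnto_apply_of_mem_orthogonal hx]

theorem extendByZero_comp_adjoint_comp_self [CompleteSpace E] [CompleteSpace F] [CompleteSpace K] :
    T.extendByZero ∘L adjoint T.extendByZero ∘L T.extendByZero = T.extendByZero := by
  have hadj : adjoint T.extendByZero ∘L T.extendByZero =
      K.subtypeL ∘L K.orthogonalProjectionOnto := by
    simp only [extendByZero, adjoint_comp, Submodule.adjoint_orthogonalProjectionOnto]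
    rw [ContinuousLinearMap.comp_assoc, ← ContinuousLinearMap.comp_assoc _ T.toContinuousLinearMap,
      T.adjoint_comp_self]
    rfl
  rw [hadj]
  ext x
  exact congrArg T (K.orthogonalProjectionOnto_mem_subspace_eq_self _)

end LinearIsometry

end ExtendByZero

section Commutant

variable {𝕜 E : Type*} [RCLike 𝕜] [NormedAddCommGroup E] [InnerProductSpace 𝕜 E] [CompleteSpace E]

theorem ContinuousLinearMap.norm_map_eq_of_inner_star_mul_self_eq {c : E →L[𝕜] E} {x y : E}
    (h : ⟪x, (star c * c) x⟫_𝕜 = ⟪y, (star c * c) y⟫_𝕜) : ‖c x‖ = ‖c y‖ := by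
  rw [apply_norm_eq_sqrt_inner_adjoint_right, apply_norm_eq_sqrt_inner_adjoint_right,
    ← star_eq_adjoint, ← mul_def, h]

namespace StarSubalgebra

variable (N : StarSubalgebra 𝕜 (E →L[𝕜] E))

def applyₗ (x : E) : N →ₗ[𝕜] E where
  toFun c := (c : E →L[𝕜] E) x
  map_add' _ _ := rfl
  map_smul' _ _ := rfl

@[simp]
theorem applyₗ_apply (x : E) (c : N) : N.applyₗ x c = (c : E →L[𝕜] E) x := rfl

variable {N}

theorem map_mem_range_applyₗ {c : E →L[𝕜] E} (hc : c ∈ N) {x y : E}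
    (hy : y ∈ LinearMap.range (N.applyₗ x)) : c y ∈ LinearMap.range (N.applyₗ x) := by
  obtain ⟨d, rfl⟩ := hy
  exact ⟨⟨c * d, mul_mem hc d.2⟩, rfl⟩

theorem map_mem_orthogonal_range_applyₗ {c : E →L[𝕜] E} (hc : c ∈ N) {x y : E}
    (hy : y ∈ (LinearMap.range (N.applyₗ x))ᗮ) : c y ∈ (LinearMap.range (N.applyₗ x))ᗮ := by
  intro w hw
  rw [← adjoint_inner_left, ← star_eq_adjoint]
  exact hy _ (map_mem_range_applyₗ (star_mem hc) hw)

theorem exists_partialIsometry_mem_centralizer {Ψ Φ : E}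
    (hN : ∀ c ∈ N, ⟪Ψ, c Ψ⟫_𝕜 = ⟪Φ, c Φ⟫_𝕜) :
    ∃ v ∈ Set.centralizer (N : Set (E →L[𝕜] E)), v * adjoint v * v = v ∧ v Ψ = Φ := by
  have hnorm (d : N) : ‖N.applyₗ Φ d‖ = ‖N.applyₗ Ψ d‖ :=
    (norm_map_eq_of_inner_star_mul_self_eq (hN _ (mul_mem (star_mem d.2) d.2))).symm
  set W := LinearMap.range (N.applyₗ Ψ)
  set v := ((N.applyₗ Ψ).isometryOfNormEq (N.applyₗ Φ) hnorm).extendByZero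
  have hv_apply (d : N) : v ((d : E →L[𝕜] E) Ψ) = (d : E →L[𝕜] E) Φ :=
    (LinearIsometry.extendByZero_apply_coe _ ⟨_, (N.applyₗ Ψ).mem_topologicalClosure_range d⟩).trans
      ((N.applyₗ Ψ).isometryOfNormEq_apply _ hnorm d)
  have hv_zero {y : E} (hy : y ∈ Wᗮ) : v y = 0 :=
    LinearIsometry.extendByZero_apply_of_mem_orthogonal _ (by rwa [Submodule.orthogonal_closure])
  refine ⟨v, Set.mem_centralizer_iff.2 fun c hc => ?_,
    LinearIsometry.extendByZero_comp_adjoint_comp_self _, by simpa using hv_apply 1⟩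
  refine ext_on_orthogonal W ?_ fun y hy => ?_
  · rintro _ ⟨d, rfl⟩
    simpa [hv_apply] using (hv_apply ⟨c * d, mul_mem hc d.2⟩).symm
  · simp [hv_zero hy, hv_zero (map_mem_orthogonal_range_applyₗ hc hy)]

end StarSubalgebra

end Commutant

theorem uhlmann_partialIsometry_general {H : Type*} [NormedAddCommGroup H]
    [InnerProductSpace ℂ H] [CompleteSpace H]
    (M_A M_B : VonNeumannAlgebra H)
    (huhlmann : UhlmannProperty M_A M_B)
    (Ψ Φ : H) (hmarg : ∀ a ∈ M_A, ⟪Ψ, a Ψ⟫_ℂ = ⟪Φ, a Φ⟫_ℂ) :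
    ∃ v ∈ M_B, v * (ContinuousLinearMap.adjoint v) * v = v ∧ v Ψ = Φ := by
  obtain ⟨v, hv, hpartial, hvΨ⟩ :=
    M_B.commutant.toStarSubalgebra.exists_partialIsometry_mem_centralizer
      fun c hc => huhlmann.inner_map_self_eq hmarg hc
  refine ⟨v, ?_, hpartial, hvΨ⟩
  rwa [← M_B.commutant_commutant, ← SetLike.mem_coe, VonNeumannAlgebra.coe_commutant]

/-- Under the Uhlmann property, two purifications of the same state on `M_A` are
related by a partial isometry in `M_B`. -/
theorem uhlmann_partialIsometry {H : Type*} [NormedAddCommGroup H]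
    [InnerProductSpace ℂ H] [CompleteSpace H]
    (M_A M_B : VonNeumannAlgebra H)
    (hcomm : ∀ a ∈ M_A, ∀ b ∈ M_B, a * b = b * a)
    (huhlmann : UhlmannProperty M_A M_B)
    (Ψ Φ : H) (hmarg : ∀ a ∈ M_A, ⟪Ψ, a Ψ⟫_ℂ = ⟪Φ, a Φ⟫_ℂ) :
    ∃ v ∈ M_B, v * (ContinuousLinearMap.adjoint v) * v = v ∧ v Ψ = Φ :=
  uhlmann_partialIsometry_general M_A M_B huhlmann Ψ Φ hmarg
end
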